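/- For a mixture-of-unitaries channel Λ_MU(ρ) = Σᵢ qᵢ Uᵢ ρ Uᵢ†, there exists a MIO channel Λ_MIO with Λ_MIO(ρ_max) = Λ_MU(ρ_max), where ρ_max = Σₙ pₙ|n₊⟩⟨n₊| is diagonal in a basis mutually unbiased to the incoherent basis. -/

import Mathlib

open Matrix BigOperators
open scoped ComplexOrder

noncomputable section

/-- A density matrix: positive semidefinite with unit trace. -/
def IsDensity {n : Type*} [Fintype n] (ρ : Matrix n n ℂ) : Prop :=
  ρ.PosSemidef ∧ ρ.trace = 1

/-- A quantum channel (CPTP map), given via a Kraus representation. -/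
def IsChannel {m n : Type*} [Fintype m] [Fintype n] [DecidableEq m]
    (Λ : Matrix m m ℂ → Matrix n n ℂ) : Prop :=
  ∃ (k : ℕ) (K : Fin k → Matrix n m ℂ),
    (∑ i, (K i)ᴴ * K i) = 1 ∧ ∀ ρ, Λ ρ = ∑ i, K i * ρ * (K i)ᴴ

/-- A maximally incoherent operation: maps every incoherent (diagonal) state to an
incoherent state.  The incoherent basis is fixed to be the standard basis. -/
def IsMIO {n : Type*} [Fintype n] (Λ : Matrix n n ℂ → Matrix n n ℂ) : Prop :=
  ∀ σ, IsDensity σ → σ.IsDiag → (Λ σ).IsDiag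

/-!
The channel is `Λ_MU ∘ D`, where `D ρ = ∑ₙ |n₊⟩⟨n₊| ρ |n₊⟩⟨n₊|` dephases in the mutually
unbiased basis; its Kraus operators are `√qᵢ Uᵢ |n₊⟩⟨n₊|`. The state `ρ_max` is diagonal in that
basis, so `D` fixes it. For an incoherent `σ`, `⟨n₊|σ|n₊⟩ = ∑ᵢ |⟨i|n₊⟩|² σᵢᵢ = tr σ / d` does not
depend on `n`, so `D σ` is a multiple of the identity, which the unital channel `Λ_MU` preserves.
-/

section RankOne

variable {n : Type*} [Fintype n]

lemma vecMulVec_mul_mul_vecMulVec (u v w x : n → ℂ) (σ : Matrix n n ℂ) :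
    vecMulVec u v * σ * vecMulVec w x = (v ⬝ᵥ σ *ᵥ w) • vecMulVec u x := by
  rw [Matrix.mul_assoc, mul_vecMulVec, vecMulVec_mul_vecMulVec, vecMulVec_smul]

lemma star_dotProduct_mulVec_of_isDiag {σ : Matrix n n ℂ} (hσ : σ.IsDiag) (v : n → ℂ) :
    star v ⬝ᵥ σ *ᵥ v = ∑ i, ((‖v i‖ ^ 2 : ℝ) : ℂ) * σ i i := by
  classical
  conv_lhs => rw [← hσ.diagonal_diag]
  simp only [dotProduct, mulVec_diagonal]
  refine Finset.sum_congr rfl fun i _ => ?_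
  rw [diag_apply, Pi.star_apply, Complex.ofReal_pow, ← Complex.conj_mul', Complex.star_def]
  ring

lemma sum_vecMulVec_star_eq_one [DecidableEq n] {b : n → n → ℂ}
    (hortho : ∀ m l, star (b m) ⬝ᵥ b l = if m = l then 1 else 0) :
    ∑ m, vecMulVec (b m) (star (b m)) = 1 := by
  set V : Matrix n n ℂ := (of b)ᵀ
  have hVV : Vᴴ * V = 1 := by
    ext m l
    simpa [V, mul_apply, one_apply, dotProduct] using hortho m l
  calc ∑ m, vecMulVec (b m) (star (b m)) = V * Vᴴ := by
        ext i j
        simp [V, mul_apply, vecMulVec_apply, Matrix.sum_apply]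
    _ = 1 := mul_eq_one_comm.mp hVV

end RankOne

section Dephasing

variable {n ι : Type*} [Fintype n] [Fintype ι]

def dephasing (b : ι → n → ℂ) (ρ : Matrix n n ℂ) : Matrix n n ℂ :=
  ∑ m, vecMulVec (b m) (star (b m)) * ρ * vecMulVec (b m) (star (b m))

lemma dephasing_eq_sum_smul (b : ι → n → ℂ) (ρ : Matrix n n ℂ) :
    dephasing b ρ = ∑ m, (star (b m) ⬝ᵥ ρ *ᵥ b m) • vecMulVec (b m) (star (b m)) := by
  simp only [dephasing, vecMulVec_mul_mul_vecMulVec]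

lemma dephasing_sum_smul_vecMulVec [DecidableEq ι] {b : ι → n → ℂ}
    (hortho : ∀ m l, star (b m) ⬝ᵥ b l = if m = l then 1 else 0) (c : ι → ℂ) :
    dephasing b (∑ m, c m • vecMulVec (b m) (star (b m))) =
      ∑ m, c m • vecMulVec (b m) (star (b m)) := by
  rw [dephasing_eq_sum_smul]
  refine Finset.sum_congr rfl fun m _ => congrArg (· • _) ?_
  simp [sum_mulVec, smul_mulVec, vecMulVec_mulVec, hortho]

lemma dephasing_of_isDiag [DecidableEq n] {b : n → n → ℂ}
    (hortho : ∀ m l, star (b m) ⬝ᵥ b l = if m = l then 1 else 0) {c : ℝ}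
    (hflat : ∀ m i, ‖b m i‖ ^ 2 = c) {σ : Matrix n n ℂ} (hσ : σ.IsDiag) :
    dephasing b σ = ((c : ℂ) * σ.trace) • 1 := by
  have hcoeff : ∀ m, star (b m) ⬝ᵥ σ *ᵥ b m = c * σ.trace := fun m => by
    simp only [star_dotProduct_mulVec_of_isDiag hσ, hflat, ← Finset.mul_sum, trace, diag_apply]
  simp only [dephasing_eq_sum_smul, hcoeff, ← Finset.smul_sum, sum_vecMulVec_star_eq_one hortho]

end Dephasing

section MixtureOfUnitaries

variable {n κ : Type*} [Fintype n] [Fintype κ]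

def mixtureOfUnitaries (q : κ → ℝ) (U : κ → Matrix n n ℂ) (ρ : Matrix n n ℂ) : Matrix n n ℂ :=
  ∑ i, (q i : ℂ) • (U i * ρ * (U i)ᴴ)

lemma mixtureOfUnitaries_smul_one [DecidableEq n] {q : κ → ℝ} (hq1 : ∑ i, q i = 1)
    {U : κ → Matrix n n ℂ} (hU : ∀ i, U i ∈ unitaryGroup n ℂ) (c : ℂ) :
    mixtureOfUnitaries q U (c • 1) = c • 1 := by
  have hUU : ∀ i, U i * (c • 1) * (U i)ᴴ = c • 1 := fun i => by
    rw [Matrix.mul_smul, Matrix.mul_one, Matrix.smul_mul, ← star_eq_conjTranspose,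
      mem_unitaryGroup_iff.mp (hU i)]
  rw [mixtureOfUnitaries, Finset.sum_congr rfl fun i _ => congrArg _ (hUU i), ← Finset.sum_smul,
    ← Complex.ofReal_sum, hq1, Complex.ofReal_one, one_smul]

end MixtureOfUnitaries

section Kraus

variable {n ι κ : Type*} [Fintype n]

lemma isChannel_of_sum_conjTranspose_mul_self [Fintype κ] {m : Type*} [Fintype m]
    [DecidableEq m] (K : κ → Matrix n m ℂ) (hK : ∑ x, (K x)ᴴ * K x = 1) :
    IsChannel fun ρ : Matrix m m ℂ => ∑ x, K x * ρ * (K x)ᴴ := by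
  let e := Fintype.equivFin κ
  refine ⟨Fintype.card κ, K ∘ e.symm, ?_, fun ρ => ?_⟩
  · rw [← hK]
    exact e.symm.sum_comp fun x => (K x)ᴴ * K x
  · exact (e.symm.sum_comp fun x => K x * ρ * (K x)ᴴ).symm

def dephasedMixtureKraus (q : κ → ℝ) (U : κ → Matrix n n ℂ) (b : ι → n → ℂ) (x : κ × ι) :
    Matrix n n ℂ :=
  ((√(q x.1) : ℝ) : ℂ) • (U x.1 * vecMulVec (b x.2) (star (b x.2)))

variable {q : κ → ℝ} {U : κ → Matrix n n ℂ} {b : ι → n → ℂ}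

lemma conjTranspose_dephasedMixtureKraus (x : κ × ι) :
    (dephasedMixtureKraus q U b x)ᴴ =
      ((√(q x.1) : ℝ) : ℂ) • (vecMulVec (b x.2) (star (b x.2)) * (U x.1)ᴴ) := by
  rw [dephasedMixtureKraus, conjTranspose_smul, conjTranspose_mul, conjTranspose_vecMulVec,
    star_star, Complex.star_def, Complex.conj_ofReal]

lemma dephasedMixtureKraus_mul_mul_conjTranspose (hq0 : ∀ i, 0 ≤ q i) (x : κ × ι)
    (ρ : Matrix n n ℂ) :
    dephasedMixtureKraus q U b x * ρ * (dephasedMixtureKraus q U b x)ᴴ =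
      (q x.1 : ℂ) • (U x.1 * (vecMulVec (b x.2) (star (b x.2)) * ρ *
        vecMulVec (b x.2) (star (b x.2))) * (U x.1)ᴴ) := by
  rw [conjTranspose_dephasedMixtureKraus, dephasedMixtureKraus, smul_mul_assoc, mul_smul_comm,
    smul_mul_assoc, smul_smul, ← Complex.ofReal_mul, Real.mul_self_sqrt (hq0 x.1)]
  simp only [Matrix.mul_assoc]

lemma sum_dephasedMixtureKraus_mul_mul_conjTranspose [Fintype ι] [Fintype κ] (hq0 : ∀ i, 0 ≤ q i)
    (ρ : Matrix n n ℂ) :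
    ∑ x, dephasedMixtureKraus q U b x * ρ * (dephasedMixtureKraus q U b x)ᴴ =
      mixtureOfUnitaries q U (dephasing b ρ) := by
  simp only [dephasedMixtureKraus_mul_mul_conjTranspose hq0, Fintype.sum_prod_type,
    mixtureOfUnitaries, dephasing, Matrix.mul_sum, Matrix.sum_mul, Finset.smul_sum]

lemma conjTranspose_dephasedMixtureKraus_mul_self [DecidableEq n] (hq0 : ∀ i, 0 ≤ q i)
    (hU : ∀ i, U i ∈ unitaryGroup n ℂ) (hnorm : ∀ m, star (b m) ⬝ᵥ b m = 1) (x : κ × ι) :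
    (dephasedMixtureKraus q U b x)ᴴ * dephasedMixtureKraus q U b x =
      (q x.1 : ℂ) • vecMulVec (b x.2) (star (b x.2)) := by
  rw [conjTranspose_dephasedMixtureKraus, dephasedMixtureKraus, smul_mul_assoc, mul_smul_comm,
    smul_smul, ← Complex.ofReal_mul, Real.mul_self_sqrt (hq0 x.1), Matrix.mul_assoc,
    ← Matrix.mul_assoc _ (U x.1), ← star_eq_conjTranspose, mem_unitaryGroup_iff'.mp (hU x.1),
    Matrix.one_mul, vecMulVec_mul_vecMulVec, hnorm, one_smul]

end Kraus

lemma sum_conjTranspose_dephasedMixtureKraus_mul_self {n κ : Type*} [Fintype n] [DecidableEq n]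
    [Fintype κ] {q : κ → ℝ} (hq0 : ∀ i, 0 ≤ q i) (hq1 : ∑ i, q i = 1) {U : κ → Matrix n n ℂ}
    (hU : ∀ i, U i ∈ unitaryGroup n ℂ) {b : n → n → ℂ}
    (hortho : ∀ m l, star (b m) ⬝ᵥ b l = if m = l then 1 else 0) :
    ∑ x, (dephasedMixtureKraus q U b x)ᴴ * dephasedMixtureKraus q U b x = 1 := by
  have hnorm : ∀ m, star (b m) ⬝ᵥ b m = 1 := fun m => by simp [hortho]
  simp only [conjTranspose_dephasedMixtureKraus_mul_self hq0 hU hnorm, Fintype.sum_prod_type,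
    ← Finset.smul_sum, sum_vecMulVec_star_eq_one hortho, ← Finset.sum_smul, ← Complex.ofReal_sum,
    hq1, Complex.ofReal_one, one_smul]

lemma isChannel_mixtureOfUnitaries_comp_dephasing {n κ : Type*} [Fintype n] [DecidableEq n]
    [Fintype κ] {q : κ → ℝ} (hq0 : ∀ i, 0 ≤ q i) (hq1 : ∑ i, q i = 1) {U : κ → Matrix n n ℂ}
    (hU : ∀ i, U i ∈ unitaryGroup n ℂ) {b : n → n → ℂ}
    (hortho : ∀ m l, star (b m) ⬝ᵥ b l = if m = l then 1 else 0) :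
    IsChannel (mixtureOfUnitaries q U ∘ dephasing b) := by
  convert isChannel_of_sum_conjTranspose_mul_self _
    (sum_conjTranspose_dephasedMixtureKraus_mul_self hq0 hq1 hU hortho) using 1
  funext ρ
  exact (sum_dephasedMixtureKraus_mul_mul_conjTranspose hq0 ρ).symm

theorem mixture_of_unitaries_on_mcms_via_MIO_general (d : ℕ)
    (b : Fin d → Fin d → ℂ)
    (hortho : ∀ n m, star (b n) ⬝ᵥ b m = if n = m then 1 else 0)
    (hmub : ∀ i n, ‖b n i‖ ^ 2 = (d : ℝ)⁻¹)
    (p : Fin d → ℝ)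
    (ρmax : Matrix (Fin d) (Fin d) ℂ)
    (hρmax : ρmax = ∑ n, (p n : ℂ) • vecMulVec (b n) (star (b n)))
    (k : ℕ) (q : Fin k → ℝ) (hq0 : ∀ i, 0 ≤ q i) (hq1 : ∑ i, q i = 1)
    (U : Fin k → Matrix (Fin d) (Fin d) ℂ)
    (hU : ∀ i, U i ∈ Matrix.unitaryGroup (Fin d) ℂ) :
    ∃ Λ : Matrix (Fin d) (Fin d) ℂ → Matrix (Fin d) (Fin d) ℂ,
      IsChannel Λ ∧ IsMIO Λ ∧
      Λ ρmax = ∑ i, (q i : ℂ) • (U i * ρmax * (U i)ᴴ) := by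
  refine ⟨mixtureOfUnitaries q U ∘ dephasing b, ?channel, ?mio, ?agree⟩
  case channel => exact isChannel_mixtureOfUnitaries_comp_dephasing hq0 hq1 hU hortho
  case mio =>
    intro σ _ hσ
    rw [Function.comp_apply, dephasing_of_isDiag hortho (fun m i => hmub i m) hσ,
      mixtureOfUnitaries_smul_one hq1 hU]
    exact isDiag_one.smul _
  case agree =>
    rw [Function.comp_apply, hρmax, dephasing_sum_smul_vecMulVec hortho, mixtureOfUnitaries]

/-- for any mixture-of-unitaries channel `Λ_MU(ρ) = Σᵢ qᵢ Uᵢ ρ Uᵢ†`, there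
is a MIO channel agreeing with `Λ_MU` on the maximally coherent mixed state
`ρ_max = Σₙ pₙ|n₊⟩⟨n₊|` (diagonal in a basis mutually unbiased to the incoherent one). -/
theorem mixture_of_unitaries_on_mcms_via_MIO (d : ℕ) (hd : 0 < d)
    (b : Fin d → Fin d → ℂ)
    (hortho : ∀ n m, star (b n) ⬝ᵥ b m = if n = m then 1 else 0)
    (hmub : ∀ i n, ‖b n i‖ ^ 2 = (d : ℝ)⁻¹)
    (p : Fin d → ℝ) (hp0 : ∀ n, 0 ≤ p n) (hp1 : ∑ n, p n = 1)
    (ρmax : Matrix (Fin d) (Fin d) ℂ)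
    (hρmax : ρmax = ∑ n, (p n : ℂ) • vecMulVec (b n) (star (b n)))
    (k : ℕ) (q : Fin k → ℝ) (hq0 : ∀ i, 0 ≤ q i) (hq1 : ∑ i, q i = 1)
    (U : Fin k → Matrix (Fin d) (Fin d) ℂ)
    (hU : ∀ i, U i ∈ Matrix.unitaryGroup (Fin d) ℂ) :
    ∃ Λ : Matrix (Fin d) (Fin d) ℂ → Matrix (Fin d) (Fin d) ℂ,
      IsChannel Λ ∧ IsMIO Λ ∧
      Λ ρmax = ∑ i, (q i : ℂ) • (U i * ρmax * (U i)ᴴ) :=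
  mixture_of_unitaries_on_mcms_via_MIO_general d b hortho hmub p ρmax hρmax k q hq0 hq1 U hU
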